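/- arXiv:2203.01198 — 5 statements merged into one kernel-verified Lean document; each statement's English description precedes it below -/
import Mathlib

section
/- Gap between successive least-squares estimates (deterministic form): fix integers d ≥ 1, t ≥ 1 and reals T ≥ 1, L ≥ 1 with log(dLT) ≥ 1 and dL ≥ 1. Let θ* ∈ ℝ^d, let a_1,…,a_{t+1} ∈ ℝ^d satisfy ‖a_s‖₂ ≤ L, let η_1,…,η_{t+1} ∈ ℝ, set y_s = ⟨θ*, a_s⟩ + η_s, V_s = I_d + Σ_{r=1}^s a_r a_r', and θ̂_s = V_s^{-1} Σ_{r=1}^s a_r y_r. Suppose |η_{t+1}| ≤ 2√(log T), λ_min(V_t) ≥ 5L²√T·log(dLT), λ_min(V_{t+1}) ≥ 5L²√T·log(dLT), and ‖θ* − θ̂_t‖_{V_t} ≤ √β for some β ≥ 1. Then ‖θ̂_{t+1} − θ̂_t‖₂ ≤ (3/(5L))·√(β/(T log(dLT))). -/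
/-- The Euclidean (ℓ²) norm of a vector in `ℝ^d`. -/
noncomputable def l2 {d : ℕ} (x : Fin d → ℝ) : ℝ := Real.sqrt (∑ i, x i ^ 2)

/-- The dot product of two vectors in `ℝ^d`. -/
def dotp {d : ℕ} (x y : Fin d → ℝ) : ℝ := ∑ i, x i * y i

/-- The outer product `a a'` of a column vector with itself. -/
def outer {d : ℕ} (x : Fin d → ℝ) : Matrix (Fin d) (Fin d) ℝ := fun i j => x i * x j

/-- The norm `‖x‖_V = √(x' V x)` induced by a positive definite matrix `V`. -/
noncomputable def normV {d : ℕ} (V : Matrix (Fin d) (Fin d) ℝ) (x : Fin d → ℝ) : ℝ :=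
  Real.sqrt (dotp x (V.mulVec x))

/-- The smallest eigenvalue of a symmetric matrix, as the infimum of the Rayleigh quotient
over the unit sphere. -/
noncomputable def lambdaMin {d : ℕ} (V : Matrix (Fin d) (Fin d) ℝ) : ℝ :=
  sInf {r : ℝ | ∃ x : Fin d → ℝ, l2 x = 1 ∧ r = dotp x (V.mulVec x)}

/-!
Put `b = a_{t+1}`. Since `V_{t+1} = V_t + b b'`, the normal equations give
`θ̂_{t+1} - θ̂_t = (b'(θ* - θ̂_t) + η_{t+1}) V_{t+1}⁻¹ b`. Writing `b'(θ* - θ̂_t)` as the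
`V_t`-inner product of `V_t⁻¹ b` and `θ* - θ̂_t`, Cauchy–Schwarz bounds it by `(L / √μ) √β`, and
`‖V_{t+1}⁻¹ b‖₂ ≤ L / μ`, where `μ = 5L²√T log(dLT)` bounds both smallest eigenvalues from below.
The rest is arithmetic.
-/

open Matrix

section

variable {d : ℕ}

lemma mulVec_nonsing_inv_mulVec {A : Matrix (Fin d) (Fin d) ℝ} (hA : IsUnit A.det)
    (w : Fin d → ℝ) : A *ᵥ (A⁻¹ *ᵥ w) = w := by
  rw [mulVec_mulVec, mul_nonsing_inv _ hA, one_mulVec]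

lemma nonsing_inv_mulVec_mulVec {A : Matrix (Fin d) (Fin d) ℝ} (hA : IsUnit A.det)
    (w : Fin d → ℝ) : A⁻¹ *ᵥ (A *ᵥ w) = w := by
  rw [mulVec_mulVec, nonsing_inv_mul _ hA, one_mulVec]

lemma dotp_eq_dotProduct (x y : Fin d → ℝ) : dotp x y = x ⬝ᵥ y := rfl

lemma l2_eq_norm (x : Fin d → ℝ) : l2 x = ‖WithLp.toLp 2 x‖ := by
  simp [l2, EuclideanSpace.norm_eq]

lemma l2_nonneg (x : Fin d → ℝ) : 0 ≤ l2 x := Real.sqrt_nonneg _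

lemma l2_smul (c : ℝ) (x : Fin d → ℝ) : l2 (c • x) = |c| * l2 x := by
  simp [l2_eq_norm, norm_smul]

lemma l2_pos {x : Fin d → ℝ} (hx : x ≠ 0) : 0 < l2 x := by
  simpa [l2_eq_norm] using hx

lemma abs_dotProduct_le (x y : Fin d → ℝ) : |x ⬝ᵥ y| ≤ l2 x * l2 y := by
  have := abs_real_inner_le_norm (WithLp.toLp 2 y) (WithLp.toLp 2 x)
  simpa [l2_eq_norm, EuclideanSpace.inner_toLp_toLp, mul_comm] using this

lemma lambdaMin_mul_l2_sq_le {V : Matrix (Fin d) (Fin d) ℝ} (hV : V.PosSemidef) {μ : ℝ}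
    (hμ : μ ≤ lambdaMin V) (x : Fin d → ℝ) : μ * l2 x ^ 2 ≤ x ⬝ᵥ V *ᵥ x := by
  rcases eq_or_ne x 0 with rfl | hx
  · simp [l2]
  have hx₀ := l2_pos hx
  set u := (l2 x)⁻¹ • x
  have hu : l2 u = 1 := by rw [l2_smul, abs_inv, abs_of_pos hx₀, inv_mul_cancel₀ hx₀.ne']
  have hu_min : lambdaMin V ≤ u ⬝ᵥ V *ᵥ u :=
    csInf_le ⟨0, fun r ⟨z, _, hr⟩ => hr ▸ hV.dotProduct_mulVec_nonneg z⟩ ⟨u, hu, rfl⟩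
  have hquad : u ⬝ᵥ V *ᵥ u = (x ⬝ᵥ V *ᵥ x) / l2 x ^ 2 := by
    simp only [u, mulVec_smul, smul_dotProduct, dotProduct_smul, smul_eq_mul]
    field_simp
  rw [← le_div_iff₀ (by positivity), ← hquad]
  exact hμ.trans hu_min

lemma l2_inv_mulVec_le {V : Matrix (Fin d) (Fin d) ℝ} (hV : V.PosDef) {μ : ℝ} (hμ : 0 < μ)
    (hμV : μ ≤ lambdaMin V) (w : Fin d → ℝ) : l2 (V⁻¹ *ᵥ w) ≤ l2 w / μ := by
  set u := V⁻¹ *ᵥ w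
  have hVu : V *ᵥ u = w := mulVec_nonsing_inv_mulVec hV.det_pos.ne'.isUnit w
  have h := lambdaMin_mul_l2_sq_le hV.posSemidef hμV u
  rw [hVu] at h
  have hCS := (le_abs_self _).trans (abs_dotProduct_le u w)
  rw [le_div_iff₀ hμ]
  nlinarith [l2_nonneg u, l2_nonneg w]

lemma abs_dotProduct_le_of_lambdaMin {V : Matrix (Fin d) (Fin d) ℝ} (hV : V.PosDef) {μ : ℝ}
    (hμ : 0 < μ) (hμV : μ ≤ lambdaMin V) (b z : Fin d → ℝ) :
    |b ⬝ᵥ z| ≤ l2 b / √μ * normV V z := by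
  set u := V⁻¹ *ᵥ b
  have hVu : V *ᵥ u = b := mulVec_nonsing_inv_mulVec hV.det_pos.ne'.isUnit b
  have hsymm : u ⬝ᵥ V *ᵥ z = b ⬝ᵥ z := by
    have hT : Vᵀ = V := hV.isHermitian
    rw [dotProduct_mulVec, ← hT, vecMul_transpose, hVu]
  have hnonneg (x : Fin d → ℝ) : 0 ≤ x ⬝ᵥ V *ᵥ x := by
    simpa only [star_trivial] using hV.posSemidef.dotProduct_mulVec_nonneg x
  have hCS := LinearMap.BilinForm.apply_mul_apply_le_of_forall_zero_le (toLinearMap₂' ℝ V)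
    (by simpa only [toLinearMap₂'_apply'] using hnonneg) u z
  simp only [toLinearMap₂'_apply', hsymm, hVu] at hCS
  have huu : u ⬝ᵥ b ≤ l2 b ^ 2 / μ :=
    calc u ⬝ᵥ b ≤ l2 u * l2 b := (le_abs_self _).trans (abs_dotProduct_le u b)
      _ ≤ l2 b / μ * l2 b := by gcongr; exacts [l2_nonneg b, l2_inv_mulVec_le hV hμ hμV b]
      _ = l2 b ^ 2 / μ := by ring
  have hzz := hnonneg z
  have hrhs : 0 ≤ l2 b / √μ * normV V z :=
    mul_nonneg (div_nonneg (l2_nonneg b) (Real.sqrt_nonneg _)) (Real.sqrt_nonneg _)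
  refine (sq_le_sq₀ (abs_nonneg _) hrhs).1 ?_
  calc |b ⬝ᵥ z| ^ 2 = b ⬝ᵥ z * (z ⬝ᵥ b) := by rw [sq_abs, sq, dotProduct_comm z]
    _ ≤ u ⬝ᵥ b * (z ⬝ᵥ V *ᵥ z) := hCS
    _ ≤ l2 b ^ 2 / μ * (z ⬝ᵥ V *ᵥ z) := mul_le_mul_of_nonneg_right huu hzz
    _ = (l2 b / √μ * normV V z) ^ 2 := by
      rw [mul_pow, div_pow, normV, dotp_eq_dotProduct, Real.sq_sqrt hμ.le, Real.sq_sqrt hzz]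

lemma outer_eq_vecMulVec (x : Fin d → ℝ) : outer x = vecMulVec x x := rfl

lemma outer_mulVec (b x : Fin d → ℝ) : outer b *ᵥ x = (b ⬝ᵥ x) • b := by
  rw [outer_eq_vecMulVec, vecMulVec_mulVec, op_smul_eq_smul]

lemma posSemidef_outer (x : Fin d → ℝ) : (outer x).PosSemidef := by
  simpa [outer_eq_vecMulVec] using posSemidef_vecMulVec_self_star x

lemma posDef_one_add_sum_outer {ι : Type*} (s : Finset ι) (a : ι → Fin d → ℝ) :
    (1 + ∑ r ∈ s, outer (a r)).PosDef :=
  PosDef.one.add_posSemidef (posSemidef_sum s fun r _ ↦ posSemidef_outer (a r))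

lemma inv_mulVec_add_outer_sub {V : Matrix (Fin d) (Fin d) ℝ} {b : Fin d → ℝ}
    (hV : IsUnit V.det) (hV' : IsUnit (V + outer b).det) (S : Fin d → ℝ) (c : ℝ) :
    (V + outer b)⁻¹ *ᵥ (S + c • b) - V⁻¹ *ᵥ S
      = (c - b ⬝ᵥ V⁻¹ *ᵥ S) • (V + outer b)⁻¹ *ᵥ b := by
  set θ := V⁻¹ *ᵥ S
  conv_lhs => rw [← nonsing_inv_mulVec_mulVec hV' θ, ← mulVec_sub, add_mulVec,
    mulVec_nonsing_inv_mulVec hV, outer_mulVec]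
  rw [← mulVec_smul, sub_smul]
  congr 1
  abel

lemma l2_inv_mulVec_add_outer_sub_le {V : Matrix (Fin d) (Fin d) ℝ} {b : Fin d → ℝ}
    (hV : V.PosDef) {μ : ℝ} (hμ : 0 < μ) (hμV : μ ≤ lambdaMin V)
    (hμV' : μ ≤ lambdaMin (V + outer b)) (θstar S : Fin d → ℝ) (η : ℝ) :
    l2 ((V + outer b)⁻¹ *ᵥ (S + (θstar ⬝ᵥ b + η) • b) - V⁻¹ *ᵥ S)
      ≤ (l2 b / √μ * normV V (θstar - V⁻¹ *ᵥ S) + |η|) * (l2 b / μ) := by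
  have hV' : (V + outer b).PosDef := hV.add_posSemidef (posSemidef_outer b)
  rw [inv_mulVec_add_outer_sub hV.det_pos.ne'.isUnit hV'.det_pos.ne'.isUnit, l2_smul]
  have hresid : θstar ⬝ᵥ b + η - b ⬝ᵥ V⁻¹ *ᵥ S = b ⬝ᵥ (θstar - V⁻¹ *ᵥ S) + η := by
    rw [dotProduct_sub, dotProduct_comm]; ring
  have hcoeff :
      |b ⬝ᵥ (θstar - V⁻¹ *ᵥ S) + η| ≤ l2 b / √μ * normV V (θstar - V⁻¹ *ᵥ S) + |η| :=
    (abs_add_le _ _).trans (by gcongr; exact abs_dotProduct_le_of_lambdaMin hV hμ hμV _ _)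
  rw [hresid]
  exact mul_le_mul hcoeff (l2_inv_mulVec_le hV' hμ hμV' b) (l2_nonneg _)
    ((abs_nonneg _).trans hcoeff)

lemma gap_bound_arith {L T g β : ℝ} (hL : 1 ≤ L) (hT : 1 ≤ T) (hg : 1 ≤ g) (hβ : 1 ≤ β) :
    (L / √(5 * L ^ 2 * √T * g) * √β + 2 * √g) * (L / (5 * L ^ 2 * √T * g))
      ≤ 3 / (5 * L) * √(β / (T * g)) := by
  have hs : 1 ≤ √T := Real.one_le_sqrt.2 hT
  have hr : 1 ≤ √g := Real.one_le_sqrt.2 hg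
  have hq : 1 ≤ √β := Real.one_le_sqrt.2 hβ
  have hg_sq : g = √g ^ 2 := (Real.sq_sqrt (by linarith)).symm
  set s := √T
  set r := √g
  set q := √β
  have hroot : 2 * L * r ≤ √(5 * L ^ 2 * s * g) := by
    apply Real.le_sqrt_of_sq_le
    rw [hg_sq]
    nlinarith [sq_nonneg (L * r)]
  have hfirst : L / √(5 * L ^ 2 * s * g) ≤ 1 / (2 * r) := by
    rw [div_le_div_iff₀ (by positivity) (by positivity)]
    nlinarith
  have hrhs : √(β / (T * g)) = q / (s * r) := by
    rw [Real.sqrt_div (by linarith), Real.sqrt_mul (by linarith)]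
  rw [hrhs]
  calc (L / √(5 * L ^ 2 * s * g) * q + 2 * r) * (L / (5 * L ^ 2 * s * g))
      ≤ (1 / (2 * r) * q + 2 * r) * (L / (5 * L ^ 2 * s * g)) := by gcongr
    _ = (q + 4 * r ^ 2) / (10 * L * s * r ^ 3) := by rw [hg_sq]; field_simp; ring
    _ ≤ 3 * q / (5 * L * s * r) := by
      have hkey : q + 4 * r ^ 2 ≤ 6 * q * r ^ 2 := by
        nlinarith [mul_le_mul hq hr zero_le_one (by linarith)]
      rw [div_le_div_iff₀ (by positivity) (by positivity)]
      nlinarith [mul_le_mul_of_nonneg_left hkey (by positivity : (0:ℝ) ≤ 5 * L * s * r)]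
    _ = 3 / (5 * L) * (q / (s * r)) := by field_simp

end

theorem stmt_8_general
    (d t : ℕ)
    (T L : ℝ) (hT : 1 ≤ T) (hL : 1 ≤ L)
    (hlog : 1 ≤ Real.log (d * L * T)) (hdL : 1 ≤ (d : ℝ) * L)
    (θstar : Fin d → ℝ)
    (a : ℕ → (Fin d → ℝ)) (ha : ∀ s ∈ Finset.Icc 1 (t + 1), l2 (a s) ≤ L)
    (η : ℕ → ℝ) (y : ℕ → ℝ)
    (hy : ∀ s ∈ Finset.Icc 1 (t + 1), y s = dotp θstar (a s) + η s)
    (V : ℕ → Matrix (Fin d) (Fin d) ℝ)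
    (hV : ∀ s, V s = (1 : Matrix (Fin d) (Fin d) ℝ) + ∑ r ∈ Finset.Icc 1 s, outer (a r))
    (θhat : ℕ → (Fin d → ℝ))
    (hθ : ∀ s, θhat s = (V s)⁻¹.mulVec (∑ r ∈ Finset.Icc 1 s, y r • a r))
    (hη : |η (t + 1)| ≤ 2 * Real.sqrt (Real.log T))
    (hmin₁ : 5 * L ^ 2 * Real.sqrt T * Real.log (d * L * T) ≤ lambdaMin (V t))
    (hmin₂ : 5 * L ^ 2 * Real.sqrt T * Real.log (d * L * T) ≤ lambdaMin (V (t + 1)))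
    (β : ℝ) (hβ : 1 ≤ β)
    (hconf : normV (V t) (θstar - θhat t) ≤ Real.sqrt β) :
    l2 (θhat (t + 1) - θhat t) ≤ (3 / (5 * L)) * Real.sqrt (β / (T * Real.log (d * L * T))) := by
  set g := Real.log (d * L * T)
  set μ := 5 * L ^ 2 * √T * g
  have hμ : 0 < μ := by positivity
  have hlast : t + 1 ∈ Finset.Icc 1 (t + 1) := by simp
  have hVsucc : V (t + 1) = V t + outer (a (t + 1)) := by
    rw [hV, hV, Finset.sum_Icc_succ_top (by omega), add_assoc]
  have hgap : θhat (t + 1) - θhat t = (V t + outer (a (t + 1)))⁻¹ *ᵥ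
      (∑ r ∈ Finset.Icc 1 t, y r • a r + (θstar ⬝ᵥ a (t + 1) + η (t + 1)) • a (t + 1))
        - (V t)⁻¹ *ᵥ ∑ r ∈ Finset.Icc 1 t, y r • a r := by
    rw [hθ, hθ, Finset.sum_Icc_succ_top (by omega), hy _ hlast, hVsucc, dotp_eq_dotProduct]
  have hlogT : Real.log T ≤ g := Real.log_le_log (by positivity) (by nlinarith)
  calc l2 (θhat (t + 1) - θhat t)
      ≤ (l2 (a (t + 1)) / √μ * normV (V t) (θstar - θhat t) + |η (t + 1)|)
          * (l2 (a (t + 1)) / μ) := by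
        rw [hgap, hθ t]
        exact l2_inv_mulVec_add_outer_sub_le (hV t ▸ posDef_one_add_sum_outer _ _) hμ hmin₁
          (hVsucc ▸ hmin₂) _ _ _
    _ ≤ (L / √μ * √β + 2 * √g) * (L / μ) := by
        have hb := ha _ hlast
        gcongr
        · exact div_nonneg (l2_nonneg _) hμ.le
        · exact Real.sqrt_nonneg _
        · exact hη.trans (by gcongr)
    _ ≤ 3 / (5 * L) * √(β / (T * g)) := gap_bound_arith hL hT hlog hβ

/-- **Gap between successive least-squares estimates (deterministic form).** Under bounded
actions, a bounded current noise term, a smallest-eigenvalue lower bound on `V_t, V_{t+1}`,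
and a confidence bound `‖θ* − θ̂_t‖_{V_t} ≤ √β`, the successive regularized least-squares
estimates satisfy `‖θ̂_{t+1} − θ̂_t‖₂ ≤ (3/(5L)) √(β/(T log(dLT)))`. -/
theorem stmt_8
    (d t : ℕ) (hd : 1 ≤ d) (ht : 1 ≤ t)
    (T L : ℝ) (hT : 1 ≤ T) (hL : 1 ≤ L)
    (hlog : 1 ≤ Real.log (d * L * T)) (hdL : 1 ≤ (d : ℝ) * L)
    (θstar : Fin d → ℝ)
    (a : ℕ → (Fin d → ℝ)) (ha : ∀ s ∈ Finset.Icc 1 (t + 1), l2 (a s) ≤ L)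
    (η : ℕ → ℝ) (y : ℕ → ℝ)
    (hy : ∀ s ∈ Finset.Icc 1 (t + 1), y s = dotp θstar (a s) + η s)
    (V : ℕ → Matrix (Fin d) (Fin d) ℝ)
    (hV : ∀ s, V s = (1 : Matrix (Fin d) (Fin d) ℝ) + ∑ r ∈ Finset.Icc 1 s, outer (a r))
    (θhat : ℕ → (Fin d → ℝ))
    (hθ : ∀ s, θhat s = (V s)⁻¹.mulVec (∑ r ∈ Finset.Icc 1 s, y r • a r))
    (hη : |η (t + 1)| ≤ 2 * Real.sqrt (Real.log T))
    (hmin₁ : 5 * L ^ 2 * Real.sqrt T * Real.log (d * L * T) ≤ lambdaMin (V t))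
    (hmin₂ : 5 * L ^ 2 * Real.sqrt T * Real.log (d * L * T) ≤ lambdaMin (V (t + 1)))
    (β : ℝ) (hβ : 1 ≤ β)
    (hconf : normV (V t) (θstar - θhat t) ≤ Real.sqrt β) :
    l2 (θhat (t + 1) - θhat t) ≤ (3 / (5 * L)) * Real.sqrt (β / (T * Real.log (d * L * T))) :=
  stmt_8_general d t T L hT hL hlog hdL θstar a ha η y hy V hV θhat hθ hη hmin₁ hmin₂ β hβ hconf
end

section
/- Gap between successive GLM estimates (deterministic form): fix integers d ≥ 1, t ≥ 1 and reals T ≥ 1, L ≥ 1 with log(dLT) ≥ 1 and dL ≥ 1. Let μ: ℝ → ℝ be continuously differentiable with k₁ ≤ μ'(x) ≤ k₂ for all x ∈ ℝ, where 0 < k₁ ≤ 1 and k₂ ≥ 1. Let θ* ∈ ℝ^d, let a_1,…,a_{t+1} ∈ ℝ^d satisfy ‖a_s‖₂ ≤ L, let η_1,…,η_{t+1} ∈ ℝ, and set y_s = μ(⟨θ*, a_s⟩) + η_s, V_s = I_d + Σ_{r=1}^s a_r a_r', g_s(θ) = θ + Σ_{r=1}^s μ(⟨θ, a_r⟩)a_r.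 Let θ̂_t and θ̂_{t+1} satisfy g_t(θ̂_t) = Σ_{s=1}^t y_s a_s and g_{t+1}(θ̂_{t+1}) = Σ_{s=1}^{t+1} y_s a_s. Suppose |η_{t+1}| ≤ 2√(log T), λ_min(V_t) ≥ 5(k₂/k₁)L²√T·log(dLT), λ_min(V_{t+1}) ≥ 5(k₂/k₁)L²√T·log(dLT), and ‖g_{t+1}(θ*) − Σ_{s=1}^{t+1} y_s a_s‖_{V_{t+1}^{-1}} ≤ √β for some β ≥ 1. Then ‖θ̂_{t+1} − θ̂_t‖₂ ≤ (3/(5L))·√(β/(k₁k₂ T log(dLT))). -/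
namespace aux
open Matrix
variable {d : ℕ}

lemma dotp_comm (x y : Fin d → ℝ) : dotp x y = dotp y x := by
  simp [dotp, mul_comm]

lemma dotp_add_right (x u v : Fin d → ℝ) : dotp x (u + v) = dotp x u + dotp x v := by
  simp [dotp, mul_add, Finset.sum_add_distrib]

lemma dotp_sub_right (x u v : Fin d → ℝ) : dotp x (u - v) = dotp x u - dotp x v := by
  simp [dotp, mul_sub, Finset.sum_sub_distrib]

lemma dotp_smul_right (x v : Fin d → ℝ) (c : ℝ) : dotp x (c • v) = c * dotp x v := by
  simp only [dotp, Pi.smul_apply, smul_eq_mul, Finset.mul_sum]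
  exact Finset.sum_congr rfl fun i _ => by ring

lemma dotp_sum_right {ι : Type*} (s : Finset ι) (x : Fin d → ℝ) (f : ι → Fin d → ℝ) :
    dotp x (∑ i ∈ s, f i) = ∑ i ∈ s, dotp x (f i) := by
  simp [dotp, Finset.mul_sum]
  exact Finset.sum_comm

lemma dotp_self_nonneg (x : Fin d → ℝ) : 0 ≤ dotp x x := by
  apply Finset.sum_nonneg; intro i _; exact mul_self_nonneg _

lemma l2_nonneg (x : Fin d → ℝ) : 0 ≤ l2 x := Real.sqrt_nonneg _

lemma l2_sq (x : Fin d → ℝ) : l2 x ^ 2 = dotp x x := by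
  rw [l2, Real.sq_sqrt (by positivity), dotp]
  simp [sq]

lemma dotp_le (x y : Fin d → ℝ) : dotp x y ≤ l2 x * l2 y := by
  have h := Finset.sum_mul_sq_le_sq_mul_sq Finset.univ x y
  have h2 : (dotp x y)^2 ≤ (l2 x * l2 y)^2 := by
    rw [mul_pow, l2_sq, l2_sq, dotp, dotp, dotp]
    simpa [sq] using h
  nlinarith [h2, mul_nonneg (l2_nonneg x) (l2_nonneg y)]


lemma outer_mulVec (v x : Fin d → ℝ) : (outer v).mulVec x = (dotp v x) • v := by
  funext i
  simp only [outer, Matrix.mulVec, dotProduct, dotp, Pi.smul_apply, smul_eq_mul]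
  rw [Finset.sum_mul]
  exact Finset.sum_congr rfl fun j _ => by ring

lemma sum_mulVec {ι : Type*} (s : Finset ι) (M : ι → Matrix (Fin d) (Fin d) ℝ) (x : Fin d → ℝ) :
    (∑ r ∈ s, M r).mulVec x = ∑ r ∈ s, (M r).mulVec x := by
  funext i
  simp only [Matrix.mulVec, dotProduct, Finset.sum_apply, Matrix.sum_apply,
    Finset.sum_mul]
  rw [Finset.sum_comm]

lemma quad_expand (x : Fin d → ℝ) {ι : Type*} (s : Finset ι) (a : ι → Fin d → ℝ) :
    dotp x (((1 : Matrix (Fin d) (Fin d) ℝ) + ∑ r ∈ s, outer (a r)).mulVec x)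
      = dotp x x + ∑ r ∈ s, (dotp x (a r)) ^ 2 := by
  rw [Matrix.add_mulVec, dotp_add_right, Matrix.one_mulVec]
  congr 1
  rw [sum_mulVec, dotp_sum_right]
  refine Finset.sum_congr rfl fun r _ => ?_
  rw [outer_mulVec, dotp_smul_right, dotp_comm x (a r), sq]

lemma quad_nonneg (x : Fin d → ℝ) {ι : Type*} (s : Finset ι) (a : ι → Fin d → ℝ) :
    0 ≤ dotp x (((1 : Matrix (Fin d) (Fin d) ℝ) + ∑ r ∈ s, outer (a r)).mulVec x) := by
  rw [quad_expand]
  have := dotp_self_nonneg x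
  have : 0 ≤ ∑ r ∈ s, (dotp x (a r))^2 := Finset.sum_nonneg fun r _ => sq_nonneg _
  linarith [dotp_self_nonneg x]

lemma smul_quad (c : ℝ) (x : Fin d → ℝ) (M : Matrix (Fin d) (Fin d) ℝ) :
    dotp (c • x) (M.mulVec (c • x)) = c^2 * dotp x (M.mulVec x) := by
  rw [Matrix.mulVec_smul, dotp_smul_right]
  have : dotp (c • x) (M.mulVec x) = c * dotp x (M.mulVec x) := by
    rw [dotp_comm, dotp_smul_right, dotp_comm x]
  rw [this]; ring

lemma l2_smul (c : ℝ) (x : Fin d → ℝ) (hc : 0 ≤ c) : l2 (c • x) = c * l2 x := by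
  rw [l2, l2]
  have : ∑ i, (c • x) i ^ 2 = c^2 * ∑ i, x i ^ 2 := by
    rw [Finset.mul_sum]; exact Finset.sum_congr rfl fun i _ => by simp [mul_pow]
  rw [this, Real.sqrt_mul (by positivity), Real.sqrt_sq hc]

/-- Rayleigh quotient lower bound from `lambdaMin`. -/
lemma rayleigh {ι : Type*} (s : Finset ι) (a : ι → Fin d → ℝ)
    (V : Matrix (Fin d) (Fin d) ℝ)
    (hVdef : V = (1 : Matrix (Fin d) (Fin d) ℝ) + ∑ r ∈ s, outer (a r))
    {Λ : ℝ} (hΛ : Λ ≤ lambdaMin V) (x : Fin d → ℝ) :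
    Λ * l2 x ^ 2 ≤ dotp x (V.mulVec x) := by
  rcases eq_or_ne (l2 x) 0 with h0 | h0
  · rw [h0]
    have hx0 : x = 0 := by
      have : ∑ i, x i ^ 2 = 0 := by
        have := Real.sqrt_eq_zero (by positivity : (0:ℝ) ≤ ∑ i, x i ^ 2) |>.mp h0
        exact this
      funext i
      have := (Finset.sum_eq_zero_iff_of_nonneg (fun i _ => sq_nonneg (x i))).mp this i (Finset.mem_univ i)
      exact pow_eq_zero_iff (n := 2) (by norm_num) |>.mp this
    subst hx0
    have h := quad_nonneg (0 : Fin d → ℝ) s a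
    rw [hVdef]
    simpa using h
  · have hl2pos : 0 < l2 x := lt_of_le_of_ne (l2_nonneg x) (Ne.symm h0)
    set u := (l2 x)⁻¹ • x with hu
    have hunit : l2 u = 1 := by
      rw [hu, l2_smul _ _ (by positivity), inv_mul_cancel₀ h0]
    have hbdd : BddBelow {r : ℝ | ∃ z : Fin d → ℝ, l2 z = 1 ∧ r = dotp z (V.mulVec z)} := by
      refine ⟨0, fun r hr => ?_⟩
      obtain ⟨z, _, rfl⟩ := hr
      rw [hVdef]; exact quad_nonneg z s a
    have hmem : dotp u (V.mulVec u) ∈ {r : ℝ | ∃ z : Fin d → ℝ, l2 z = 1 ∧ r = dotp z (V.mulVec z)} :=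
      ⟨u, hunit, rfl⟩
    have hle : Λ ≤ dotp u (V.mulVec u) := le_trans hΛ (csInf_le hbdd hmem)
    have hq : dotp u (V.mulVec u) = (l2 x)⁻¹^2 * dotp x (V.mulVec x) := smul_quad _ _ _
    rw [hq] at hle
    have := mul_le_mul_of_nonneg_right hle (le_of_lt (by positivity : (0:ℝ) < l2 x ^ 2))
    calc Λ * l2 x ^ 2 ≤ (l2 x)⁻¹^2 * dotp x (V.mulVec x) * l2 x ^2 := this
      _ = dotp x (V.mulVec x) := by field_simp

/-- Cauchy–Schwarz for a PSD symmetric bilinear form. -/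
lemma cs_psd (M : Matrix (Fin d) (Fin d) ℝ) (hsymm : Mᵀ = M)
    (hpsd : ∀ z, 0 ≤ dotp z (M.mulVec z)) (x y : Fin d → ℝ) :
    dotp x (M.mulVec y) ≤ Real.sqrt (dotp x (M.mulVec x)) * Real.sqrt (dotp y (M.mulVec y)) := by
  have hswap : ∀ u v : Fin d → ℝ, dotp u (M.mulVec v) = dotp v (M.mulVec u) := by
    intro u v
    simp only [dotp, Matrix.mulVec, dotProduct, Finset.mul_sum]
    rw [Finset.sum_comm]
    refine Finset.sum_congr rfl fun i _ => Finset.sum_congr rfl fun j _ => ?_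
    have hM : M j i = M i j := by conv_lhs => rw [← hsymm, Matrix.transpose_apply]
    rw [hM]; ring
  set A := dotp x (M.mulVec x)
  set B := dotp x (M.mulVec y)
  set C := dotp y (M.mulVec y)
  have key : ∀ s : ℝ, 0 ≤ A * (s * s) + (2*B) * s + C := by
    intro s
    have h := hpsd (s • x + y)
    have expand : dotp (s • x + y) (M.mulVec (s • x + y)) = A * (s*s) + (2*B)*s + C := by
      have hadd : dotp (s • x + y) (M.mulVec (s • x + y))
          = dotp (s • x + y) (s • (M.mulVec x)) + dotp (s • x + y) (M.mulVec y) := by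
        rw [Matrix.mulVec_add, Matrix.mulVec_smul, dotp_add_right]
      have h1 : dotp (s • x + y) (M.mulVec x) = s * A + dotp y (M.mulVec x) := by
        rw [dotp_comm, dotp_add_right (M.mulVec x), dotp_smul_right,
          dotp_comm (M.mulVec x) x, dotp_comm (M.mulVec x) y]
      have h2 : dotp (s • x + y) (M.mulVec y) = s * B + C := by
        rw [dotp_comm, dotp_add_right (M.mulVec y), dotp_smul_right,
          dotp_comm (M.mulVec y) x, dotp_comm (M.mulVec y) y]
      have h3 : dotp y (M.mulVec x) = B := hswap y x
      rw [hadd, dotp_smul_right, h1, h2, h3]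
      ring
    rw [expand] at h; exact h
  have hd := discrim_le_zero key
  rw [discrim] at hd
  have hB2 : B^2 ≤ A * C := by nlinarith
  have : B ≤ Real.sqrt (B^2) := by
    rw [Real.sqrt_sq_eq_abs]; exact le_abs_self _
  calc B ≤ Real.sqrt (B^2) := this
    _ ≤ Real.sqrt (A*C) := Real.sqrt_le_sqrt hB2
    _ = Real.sqrt A * Real.sqrt C := Real.sqrt_mul (hpsd x) _


lemma transpose_V {ι : Type*} (s : Finset ι) (a : ι → Fin d → ℝ) :
    ((1 : Matrix (Fin d) (Fin d) ℝ) + ∑ r ∈ s, outer (a r))ᵀ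
      = (1 : Matrix (Fin d) (Fin d) ℝ) + ∑ r ∈ s, outer (a r) := by
  rw [Matrix.transpose_add, Matrix.transpose_one]
  congr 1
  rw [Matrix.transpose_sum]
  refine Finset.sum_congr rfl fun r _ => ?_
  funext i j
  simp [Matrix.transpose_apply, outer, mul_comm]

lemma det_ne_zero (V : Matrix (Fin d) (Fin d) ℝ)
    (hpd : ∀ z, dotp z z ≤ dotp z (V.mulVec z)) : V.det ≠ 0 := by
  intro hdet
  obtain ⟨v, hv0, hv⟩ := (Matrix.exists_mulVec_eq_zero_iff).mpr hdet
  have h1 : dotp v v ≤ 0 := by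
    have := hpd v
    rw [hv] at this
    simpa [dotp] using this
  have h2 : v = 0 := by
    funext i
    have hz : ∑ i, v i * v i = 0 := le_antisymm h1 (dotp_self_nonneg v)
    have := (Finset.sum_eq_zero_iff_of_nonneg (fun i _ => mul_self_nonneg (v i))).mp hz i
      (Finset.mem_univ i)
    exact mul_self_eq_zero.mp this
  exact hv0 h2

lemma dotp_le_normV (V : Matrix (Fin d) (Fin d) ℝ) (hsymm : Vᵀ = V)
    (hpd : ∀ z, dotp z z ≤ dotp z (V.mulVec z)) (δ E : Fin d → ℝ) :
    dotp δ E ≤ Real.sqrt (dotp δ (V.mulVec δ)) * normV V⁻¹ E := by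
  have hdet : IsUnit V.det := isUnit_iff_ne_zero.mpr (det_ne_zero V hpd)
  set F := V⁻¹.mulVec E with hF
  have hVF : V.mulVec F = E := by
    rw [hF, Matrix.mulVec_mulVec, Matrix.mul_nonsing_inv V hdet, Matrix.one_mulVec]
  have hpsd : ∀ z, 0 ≤ dotp z (V.mulVec z) := fun z => le_trans (dotp_self_nonneg z) (hpd z)
  have hFF : dotp F (V.mulVec F) = dotp E (V⁻¹.mulVec E) := by
    rw [hVF, dotp_comm, hF]
  calc dotp δ E = dotp δ (V.mulVec F) := by rw [hVF]
    _ ≤ Real.sqrt (dotp δ (V.mulVec δ)) * Real.sqrt (dotp F (V.mulVec F)) :=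
        cs_psd V hsymm hpsd δ F
    _ = Real.sqrt (dotp δ (V.mulVec δ)) * normV V⁻¹ E := by rw [hFF, normV]

section mvt
variable {μ μ' : ℝ → ℝ} {k₁ k₂ : ℝ}

lemma mvt_bounds (hderiv : ∀ x, HasDerivAt μ (μ' x) x)
    (hb : ∀ x, k₁ ≤ μ' x ∧ μ' x ≤ k₂) (x y : ℝ) (hxy : x ≤ y) :
    k₁ * (y - x) ≤ μ y - μ x ∧ μ y - μ x ≤ k₂ * (y - x) := by
  have m1 : Monotone (fun z => μ z - k₁ * z) := by
    refine monotone_of_hasDerivAt_nonneg (f' := fun z => μ' z - k₁ * 1) ?_ ?_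
    · intro z
      exact (hderiv z).sub ((hasDerivAt_id z).const_mul k₁)
    · intro z
      simp only [Pi.zero_apply, mul_one, sub_nonneg]
      exact (hb z).1
  have m2 : Monotone (fun z => k₂ * z - μ z) := by
    refine monotone_of_hasDerivAt_nonneg (f' := fun z => k₂ * 1 - μ' z) ?_ ?_
    · intro z
      exact ((hasDerivAt_id z).const_mul k₂).sub (hderiv z)
    · intro z
      simp only [Pi.zero_apply, mul_one, sub_nonneg]
      exact (hb z).2
  constructor
  · have := m1 hxy
    simp only at this
    linarith
  · have := m2 hxy
    simp only at this
    linarith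

lemma mvt_sq (hderiv : ∀ x, HasDerivAt μ (μ' x) x)
    (hb : ∀ x, k₁ ≤ μ' x ∧ μ' x ≤ k₂) (x y : ℝ) :
    k₁ * (y - x) ^ 2 ≤ (μ y - μ x) * (y - x) := by
  rcases le_total x y with h | h
  · have := (mvt_bounds hderiv hb x y h).1
    nlinarith [sub_nonneg.mpr h]
  · have := (mvt_bounds hderiv hb y x h).1
    nlinarith [sub_nonneg.mpr h]

lemma mvt_abs (hderiv : ∀ x, HasDerivAt μ (μ' x) x)
    (hb : ∀ x, k₁ ≤ μ' x ∧ μ' x ≤ k₂) (hk : 0 ≤ k₁) (x y : ℝ) :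
    |μ y - μ x| ≤ k₂ * |y - x| := by
  rcases le_total x y with h | h
  · obtain ⟨h1, h2⟩ := mvt_bounds hderiv hb x y h
    rw [abs_of_nonneg (by nlinarith [sub_nonneg.mpr h]), abs_of_nonneg (sub_nonneg.mpr h)]
    exact h2
  · obtain ⟨h1, h2⟩ := mvt_bounds hderiv hb y x h
    rw [abs_sub_comm, abs_sub_comm y x, abs_of_nonneg (by nlinarith [sub_nonneg.mpr h]),
      abs_of_nonneg (sub_nonneg.mpr h)]
    exact h2

end mvt


lemma dotp_sub_left (x y z : Fin d → ℝ) : dotp (x - y) z = dotp x z - dotp y z := by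
  simp [dotp, sub_mul, Finset.sum_sub_distrib]

lemma l2_neg (x : Fin d → ℝ) : l2 (-x) = l2 x := by simp [l2]

lemma dotp_neg_right (x y : Fin d → ℝ) : dotp x (-y) = - dotp x y := by
  simp [dotp, mul_neg, Finset.sum_neg_distrib]

lemma abs_dotp_le (x y : Fin d → ℝ) : |dotp x y| ≤ l2 x * l2 y := by
  rw [abs_le]
  constructor
  · have h := dotp_le x (-y)
    rw [dotp_neg_right, l2_neg] at h
    linarith
  · exact dotp_le x y

end aux

set_option maxHeartbeats 1000000

/-- **Gap between successive GLM estimates (deterministic form).** Under the stated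
conditions on the link function, actions, the current noise term, smallest-eigenvalue
lower bounds on `V_t, V_{t+1}`, and the self-normalized score bound at time `t+1`, the
successive GLM estimates satisfy
`‖θ̂_{t+1} − θ̂_t‖₂ ≤ (3/(5L)) √(β/(k₁ k₂ T log(dLT)))`. -/
theorem stmt_12
    (d t : ℕ) (hd : 1 ≤ d) (ht : 1 ≤ t)
    (T L : ℝ) (hT : 1 ≤ T) (hL : 1 ≤ L)
    (hlog : 1 ≤ Real.log (d * L * T)) (hdL : 1 ≤ (d : ℝ) * L)
    (μ μ' : ℝ → ℝ)
    (hderiv : ∀ x, HasDerivAt μ (μ' x) x) (hcont : Continuous μ')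
    (k₁ k₂ : ℝ) (hk₁0 : 0 < k₁) (hk₁1 : k₁ ≤ 1) (hk₂ : 1 ≤ k₂)
    (hbounds : ∀ x, k₁ ≤ μ' x ∧ μ' x ≤ k₂)
    (θstar : Fin d → ℝ)
    (a : ℕ → (Fin d → ℝ)) (ha : ∀ s ∈ Finset.Icc 1 (t + 1), l2 (a s) ≤ L)
    (η : ℕ → ℝ) (y : ℕ → ℝ)
    (hy : ∀ s ∈ Finset.Icc 1 (t + 1), y s = μ (dotp θstar (a s)) + η s)
    (V : ℕ → Matrix (Fin d) (Fin d) ℝ)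
    (hV : ∀ s, V s = (1 : Matrix (Fin d) (Fin d) ℝ) + ∑ r ∈ Finset.Icc 1 s, outer (a r))
    (g : ℕ → (Fin d → ℝ) → (Fin d → ℝ))
    (hg : ∀ s θ, g s θ = θ + ∑ r ∈ Finset.Icc 1 s, μ (dotp θ (a r)) • a r)
    (θhat : ℕ → (Fin d → ℝ))
    (hθt : g t (θhat t) = ∑ s ∈ Finset.Icc 1 t, y s • a s)
    (hθt1 : g (t + 1) (θhat (t + 1)) = ∑ s ∈ Finset.Icc 1 (t + 1), y s • a s)
    (hη : |η (t + 1)| ≤ 2 * Real.sqrt (Real.log T))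
    (hmin₁ : 5 * (k₂ / k₁) * L ^ 2 * Real.sqrt T * Real.log (d * L * T) ≤ lambdaMin (V t))
    (hmin₂ : 5 * (k₂ / k₁) * L ^ 2 * Real.sqrt T * Real.log (d * L * T) ≤
      lambdaMin (V (t + 1)))
    (β : ℝ) (hβ : 1 ≤ β)
    (hscore : normV ((V (t + 1))⁻¹)
        (g (t + 1) θstar - ∑ s ∈ Finset.Icc 1 (t + 1), y s • a s) ≤ Real.sqrt β) :
    l2 (θhat (t + 1) - θhat t) ≤
      (3 / (5 * L)) * Real.sqrt (β / (k₁ * k₂ * T * Real.log (d * L * T))) := by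
  -- abbreviations
  set ℓ : ℝ := Real.log (d * L * T) with hℓdef
  set S : ℝ := Real.sqrt T with hSdef
  set Λ : ℝ := 5 * (k₂ / k₁) * L ^ 2 * S * ℓ with hΛdef
  set w : ℝ := Real.sqrt (Real.log T) with hwdef
  set rβ : ℝ := Real.sqrt β with hrβdef
  set rr : ℝ := Real.sqrt (k₂ / k₁) with hrrdef
  set rk : ℝ := Real.sqrt (k₁ * k₂) with hrkdef
  set rℓ : ℝ := Real.sqrt ℓ with hrℓdef
  set sΛ : ℝ := Real.sqrt Λ with hsΛdef
  -- basic positivity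
  have hL0 : (0:ℝ) < L := by linarith
  have hk₂0 : (0:ℝ) < k₂ := by linarith
  have hT0 : (0:ℝ) < T := by linarith
  have hk210 : (0:ℝ) < k₂ / k₁ := div_pos hk₂0 hk₁0
  have hk21 : (1:ℝ) ≤ k₂ / k₁ := by
    rw [le_div_iff₀ hk₁0]; nlinarith only [hk₁1, hk₂]
  have hS1 : (1:ℝ) ≤ S := by
    rw [hSdef, show (1:ℝ) = Real.sqrt 1 from (Real.sqrt_one).symm]
    exact Real.sqrt_le_sqrt hT
  have hS0 : (0:ℝ) < S := by linarith
  have hℓ1 : (1:ℝ) ≤ ℓ := hlog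
  have hℓ0 : (0:ℝ) < ℓ := by linarith
  have hΛpos : (0:ℝ) < Λ := by
    rw [hΛdef]
    have h5 : (0:ℝ) < 5 := by norm_num
    exact mul_pos (mul_pos (mul_pos (mul_pos h5 hk210) (pow_pos hL0 2)) hS0) hℓ0
  have hw0 : (0:ℝ) ≤ w := Real.sqrt_nonneg _
  have hrβ1 : (1:ℝ) ≤ rβ := by
    rw [hrβdef, show (1:ℝ) = Real.sqrt 1 from (Real.sqrt_one).symm]
    exact Real.sqrt_le_sqrt hβ
  have hrr1 : (1:ℝ) ≤ rr := by
    rw [hrrdef, show (1:ℝ) = Real.sqrt 1 from (Real.sqrt_one).symm]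
    exact Real.sqrt_le_sqrt hk21
  have hrℓ1 : (1:ℝ) ≤ rℓ := by
    rw [hrℓdef, show (1:ℝ) = Real.sqrt 1 from (Real.sqrt_one).symm]
    exact Real.sqrt_le_sqrt hℓ1
  have hrβ0 : (0:ℝ) < rβ := by linarith
  have hrr0 : (0:ℝ) < rr := by linarith
  have hrℓ0 : (0:ℝ) < rℓ := by linarith
  have hrk0 : (0:ℝ) < rk := by
    rw [hrkdef]; exact Real.sqrt_pos.mpr (mul_pos hk₁0 hk₂0)
  have hsΛ0 : (0:ℝ) < sΛ := by
    rw [hsΛdef]; exact Real.sqrt_pos.mpr hΛpos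
  have hsΛ2 : sΛ ^ 2 = Λ := by rw [hsΛdef]; exact Real.sq_sqrt hΛpos.le
  have hrr2 : rr ^ 2 = k₂ / k₁ := by rw [hrrdef]; exact Real.sq_sqrt hk210.le
  have hrℓ2 : rℓ ^ 2 = ℓ := by rw [hrℓdef]; exact Real.sq_sqrt hℓ0.le
  have hS2 : S ^ 2 = T := by rw [hSdef]; exact Real.sq_sqrt hT0.le
  have hrβ2 : rβ ^ 2 = β := by rw [hrβdef]; exact Real.sq_sqrt (by linarith)
  have hrrrk : rr * rk = k₂ := by
    rw [hrrdef, hrkdef, ← Real.sqrt_mul hk210.le]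
    rw [show k₂ / k₁ * (k₁ * k₂) = k₂ ^ 2 by field_simp]
    exact Real.sqrt_sq hk₂0.le
  have hwrℓ : w ≤ rℓ := by
    rw [hwdef, hrℓdef, hℓdef]
    apply Real.sqrt_le_sqrt
    apply Real.log_le_log hT0
    nlinarith only [hdL, hT0]
  have hΛ5L : 5 * L ^ 2 ≤ Λ := by
    rw [hΛdef]
    have h1 : 1 ≤ (k₂/k₁) * S := by nlinarith only [hk21, hS1]
    have h2 : 1 ≤ (k₂/k₁) * S * ℓ := by nlinarith only [h1, hℓ1]
    nlinarith only [h2, pow_pos hL0 2]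
  have hΛexp : k₁ * Λ = 5 * k₂ * L ^ 2 * S * ℓ := by
    rw [hΛdef]; field_simp; try ring
  have hsΛB : sΛ ≤ (9/4) * rr * L * rℓ * S := by
    have hB0 : (0:ℝ) ≤ (9/4) * rr * L * rℓ * S :=
      le_of_lt (mul_pos (mul_pos (mul_pos (mul_pos (by norm_num) hrr0) hL0) hrℓ0) hS0)
    have hΛle : Λ ≤ ((9/4) * rr * L * rℓ * S) ^ 2 := by
      have e : ((9/4) * rr * L * rℓ * S) ^ 2 = (81/16) * (k₂/k₁) * L^2 * ℓ * S^2 := by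
        rw [show ((9/4) * rr * L * rℓ * S) ^ 2 = (81/16) * rr^2 * L^2 * rℓ^2 * S^2 by ring,
          hrr2, hrℓ2]
      rw [e, hΛdef]
      have hX : (0:ℝ) < (k₂/k₁) * L^2 * ℓ * S :=
        mul_pos (mul_pos (mul_pos hk210 (pow_pos hL0 2)) hℓ0) hS0
      nlinarith only [hS1, hX]
    calc sΛ = Real.sqrt Λ := hsΛdef
      _ ≤ Real.sqrt (((9/4) * rr * L * rℓ * S) ^ 2) := Real.sqrt_le_sqrt hΛle
      _ = (9/4) * rr * L * rℓ * S := Real.sqrt_sq hB0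
  clear_value ℓ S Λ w rβ rr rk rℓ sΛ
  -- membership facts
  have ht1mem : t + 1 ∈ Finset.Icc 1 (t + 1) := by
    simp [Finset.mem_Icc]
  have hat1 : l2 (a (t + 1)) ≤ L := ha _ ht1mem
  have ha0 : (0:ℝ) ≤ l2 (a (t + 1)) := aux.l2_nonneg _
  -- symmetry / psd facts for V (t+1)
  have hsymm1 : (V (t + 1)).transpose = V (t + 1) := by rw [hV]; exact aux.transpose_V _ a
  have hpd1 : ∀ z, dotp z z ≤ dotp z ((V (t + 1)).mulVec z) := by
    intro z
    rw [hV, aux.quad_expand]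
    have h := Finset.sum_nonneg (fun r (_ : r ∈ Finset.Icc 1 (t+1)) => sq_nonneg (dotp z (a r)))
    linarith
  -- Rayleigh bounds
  have hray_t : ∀ x : Fin d → ℝ, Λ * l2 x ^ 2 ≤ dotp x ((V t).mulVec x) :=
    fun x => aux.rayleigh _ a (V t) (hV t) hmin₁ x
  have hray_t1 : ∀ x : Fin d → ℝ, Λ * l2 x ^ 2 ≤ dotp x ((V (t+1)).mulVec x) :=
    fun x => aux.rayleigh _ a (V (t+1)) (hV (t+1)) hmin₂ x
  -- monotone operator inequality
  have hG : ∀ (s : ℕ) (θ₁ θ₂ : Fin d → ℝ),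
      k₁ * dotp (θ₂ - θ₁) ((V s).mulVec (θ₂ - θ₁)) ≤ dotp (θ₂ - θ₁) (g s θ₂ - g s θ₁) := by
    intro s θ₁ θ₂
    have hdiff : g s θ₂ - g s θ₁
        = (θ₂ - θ₁) + ∑ r ∈ Finset.Icc 1 s,
            (μ (dotp θ₂ (a r)) - μ (dotp θ₁ (a r))) • a r := by
      rw [hg, hg, add_sub_add_comm, ← Finset.sum_sub_distrib]
      congr 1
      exact Finset.sum_congr rfl fun r _ => (sub_smul _ _ _).symm
    rw [hdiff, aux.dotp_add_right, aux.dotp_sum_right, hV s, aux.quad_expand]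
    have hterm : ∀ r ∈ Finset.Icc 1 s,
        k₁ * (dotp (θ₂ - θ₁) (a r)) ^ 2
          ≤ dotp (θ₂ - θ₁) ((μ (dotp θ₂ (a r)) - μ (dotp θ₁ (a r))) • a r) := by
      intro r _
      rw [aux.dotp_smul_right]
      have hsub : dotp θ₂ (a r) - dotp θ₁ (a r) = dotp (θ₂ - θ₁) (a r) :=
        (aux.dotp_sub_left θ₂ θ₁ (a r)).symm
      have hm := aux.mvt_sq hderiv hbounds (dotp θ₁ (a r)) (dotp θ₂ (a r))
      rw [hsub] at hm
      linarith
    have hsum := Finset.sum_le_sum hterm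
    have h0 : k₁ * dotp (θ₂ - θ₁) (θ₂ - θ₁) ≤ dotp (θ₂ - θ₁) (θ₂ - θ₁) := by
      nlinarith only [aux.dotp_self_nonneg (θ₂ - θ₁), hk₁1, hk₁0]
    rw [mul_add, Finset.mul_sum]
    exact add_le_add h0 hsum
  -- splitting sums at t+1
  have hsplit_g : ∀ θ : Fin d → ℝ,
      g (t + 1) θ = g t θ + μ (dotp θ (a (t + 1))) • a (t + 1) := by
    intro θ
    rw [hg, hg, Finset.sum_Icc_succ_top (Nat.le_add_left 1 t)]
    abel
  have hsplit_y : ∑ s ∈ Finset.Icc 1 (t + 1), y s • a s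
      = (∑ s ∈ Finset.Icc 1 t, y s • a s) + y (t + 1) • a (t + 1) :=
    Finset.sum_Icc_succ_top (Nat.le_add_left 1 t) _
  -- key vectors
  set E : Fin d → ℝ := g (t + 1) θstar - ∑ s ∈ Finset.Icc 1 (t + 1), y s • a s with hEdef
  set δ : Fin d → ℝ := θstar - θhat t with hδdef
  set Δ : Fin d → ℝ := θhat (t + 1) - θhat t with hΔdef
  set c : ℝ := y (t + 1) - μ (dotp (θhat t) (a (t + 1))) with hcdef
  have hid1 : g t θstar - g t (θhat t) = E + η (t + 1) • a (t + 1) := by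
    rw [hEdef, hsplit_g θstar, hsplit_y, hθt, hy (t + 1) ht1mem, add_smul]
    abel
  have hid2 : g (t + 1) (θhat (t + 1)) - g (t + 1) (θhat t) = c • a (t + 1) := by
    rw [hθt1, hsplit_g (θhat t), hθt, hcdef, hsplit_y, sub_smul]
    abel
  -- step 1 : bound on l2 δ
  set q : ℝ := dotp δ ((V t).mulVec δ) with hqdef
  set q' : ℝ := dotp δ ((V (t + 1)).mulVec δ) with hq'def
  set sq : ℝ := Real.sqrt q with hsqdef
  have hδ0 : 0 ≤ l2 δ := aux.l2_nonneg δ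
  have hrayq : Λ * l2 δ ^ 2 ≤ q := by rw [hqdef]; exact hray_t δ
  have hrayq' : Λ * l2 δ ^ 2 ≤ q' := by rw [hq'def]; exact hray_t1 δ
  have hq0 : 0 ≤ q :=
    le_trans (mul_nonneg hΛpos.le (sq_nonneg _)) hrayq
  have hq'0 : 0 ≤ q' :=
    le_trans (mul_nonneg hΛpos.le (sq_nonneg _)) hrayq'
  have hsq2 : sq ^ 2 = q := by rw [hsqdef]; exact Real.sq_sqrt hq0
  have hsq0 : 0 ≤ sq := by rw [hsqdef]; exact Real.sqrt_nonneg _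
  have hδsq : sΛ * l2 δ ≤ sq := by
    nlinarith only [hrayq, hsΛ2, hsq2, mul_nonneg hsΛ0.le hδ0, hsq0]
  have habsδ : |dotp δ (a (t + 1))| ≤ L * l2 δ := by
    have h := aux.abs_dotp_le δ (a (t + 1))
    nlinarith only [h, hat1, ha0, hδ0, abs_nonneg (dotp δ (a (t + 1)))]
  have habs2 : (dotp δ (a (t + 1))) ^ 2 ≤ L ^ 2 * l2 δ ^ 2 := by
    nlinarith only [habsδ, abs_nonneg (dotp δ (a (t + 1))), sq_abs (dotp δ (a (t + 1))),
      mul_nonneg hL0.le hδ0]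
  have hq'q : q' ≤ (121/100) * q := by
    have hsplitq : q' = q + (dotp δ (a (t + 1))) ^ 2 := by
      rw [hq'def, hqdef, hV t, hV (t + 1), aux.quad_expand, aux.quad_expand,
        Finset.sum_Icc_succ_top (Nat.le_add_left 1 t)]
      ring
    have h1 : Λ * (dotp δ (a (t + 1))) ^ 2 ≤ L ^ 2 * q := by
      nlinarith only [hrayq, habs2, sq_nonneg (dotp δ (a (t + 1))), hΛpos,
        pow_pos hL0 2]
    nlinarith only [sq_nonneg (dotp δ (a (t + 1))), hΛ5L, hq0, h1, pow_pos hL0 2, hsplitq]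
  have hsq' : Real.sqrt q' ≤ (11/10) * sq := by
    have h1 : q' ≤ ((11/10) * sq) ^ 2 := by nlinarith only [hq'q, hsq2, hq0]
    calc Real.sqrt q' ≤ Real.sqrt (((11/10) * sq) ^ 2) := Real.sqrt_le_sqrt h1
      _ = (11/10) * sq := Real.sqrt_sq (by nlinarith only [hsq0])
  have hmain : k₁ * q ≤ dotp δ E + η (t + 1) * dotp δ (a (t + 1)) := by
    have h := hG t (θhat t) θstar
    rw [← hδdef] at h
    rw [hid1, aux.dotp_add_right, aux.dotp_smul_right, ← hqdef] at h
    exact h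
  have hdE : dotp δ E ≤ Real.sqrt q' * rβ := by
    have h := aux.dotp_le_normV (V (t + 1)) hsymm1 hpd1 δ E
    rw [← hq'def] at h
    have h2 : normV ((V (t + 1))⁻¹) E ≤ rβ := hscore
    calc dotp δ E ≤ Real.sqrt q' * normV ((V (t + 1))⁻¹) E := h
      _ ≤ Real.sqrt q' * rβ := mul_le_mul_of_nonneg_left h2 (Real.sqrt_nonneg _)
  have hηb : η (t + 1) * dotp δ (a (t + 1)) ≤ 2 * w * (L * l2 δ) := by
    have h1 : η (t + 1) * dotp δ (a (t + 1)) ≤ |η (t + 1)| * |dotp δ (a (t + 1))| := by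
      calc η (t + 1) * dotp δ (a (t + 1)) ≤ |η (t + 1) * dotp δ (a (t + 1))| := le_abs_self _
        _ = |η (t + 1)| * |dotp δ (a (t + 1))| := abs_mul _ _
    nlinarith only [h1, habsδ, hη, abs_nonneg (η (t + 1)), abs_nonneg (dotp δ (a (t + 1))),
      mul_nonneg hL0.le hδ0, hw0]
  set P : ℝ := (11/10) * rβ * sΛ + 2 * w * L with hPdef
  have hP0 : 0 ≤ P := by
    rw [hPdef]
    have := mul_nonneg (mul_nonneg (by norm_num : (0:ℝ) ≤ 11/10) hrβ0.le) hsΛ0.le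
    have := mul_nonneg (mul_nonneg (by norm_num : (0:ℝ) ≤ 2) hw0) hL0.le
    linarith
  have hkey : k₁ * sΛ * q ≤ P * sq := by
    have hcomb : k₁ * q ≤ (11/10) * sq * rβ + 2 * w * (L * l2 δ) := by
      nlinarith only [hmain, hdE, hηb, hsq', Real.sqrt_nonneg q', hrβ0]
    have e1 : sΛ * (k₁ * q) ≤ sΛ * ((11/10) * sq * rβ + 2 * w * (L * l2 δ)) :=
      mul_le_mul_of_nonneg_left hcomb hsΛ0.le
    have e2 : 2 * w * L * (sΛ * l2 δ) ≤ 2 * w * L * sq :=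
      mul_le_mul_of_nonneg_left hδsq (mul_nonneg (mul_nonneg (by norm_num) hw0) hL0.le)
    rw [hPdef]
    nlinarith only [e1, e2]
  have hsqP : k₁ * sΛ * sq ≤ P := by
    rcases eq_or_lt_of_le hsq0 with h | h
    · rw [← h]; simpa using hP0
    · have hkey' := hkey
      rw [← hsq2] at hkey'
      have h1 : (k₁ * sΛ * sq) * sq ≤ P * sq := by nlinarith only [hkey']
      exact le_of_mul_le_mul_right h1 h
  have hδb : k₁ * Λ * l2 δ ≤ P := by
    have e1 : k₁ * Λ * l2 δ = (k₁ * sΛ) * (sΛ * l2 δ) := by rw [← hsΛ2]; ring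
    have e2 : (k₁ * sΛ) * (sΛ * l2 δ) ≤ (k₁ * sΛ) * sq :=
      mul_le_mul_of_nonneg_left hδsq (mul_nonneg hk₁0.le hsΛ0.le)
    calc k₁ * Λ * l2 δ = (k₁ * sΛ) * (sΛ * l2 δ) := e1
      _ ≤ (k₁ * sΛ) * sq := e2
      _ = k₁ * sΛ * sq := by ring
      _ ≤ P := hsqP
  -- step 2 : bound on |c|
  have hc : |c| * (k₁ * Λ) ≤ 2 * w * (k₁ * Λ) + k₂ * L * P := by
    have hcval : c = η (t + 1)
        + (μ (dotp θstar (a (t + 1))) - μ (dotp (θhat t) (a (t + 1)))) := by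
      rw [hcdef, hy (t + 1) ht1mem]; ring
    have habsμ : |μ (dotp θstar (a (t + 1))) - μ (dotp (θhat t) (a (t + 1)))|
        ≤ k₂ * |dotp δ (a (t + 1))| := by
      have h := aux.mvt_abs hderiv hbounds hk₁0.le (dotp (θhat t) (a (t + 1)))
        (dotp θstar (a (t + 1)))
      have hsub : dotp θstar (a (t + 1)) - dotp (θhat t) (a (t + 1)) = dotp δ (a (t + 1)) := by
        rw [hδdef]; exact (aux.dotp_sub_left θstar (θhat t) (a (t + 1))).symm
      rw [hsub] at h
      exact h
    have habsc : |c| ≤ 2 * w + k₂ * (L * l2 δ) := by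
      calc |c| ≤ |η (t + 1)|
            + |μ (dotp θstar (a (t + 1))) - μ (dotp (θhat t) (a (t + 1)))| := by
            rw [hcval]; exact abs_add_le _ _
        _ ≤ 2 * w + k₂ * (L * l2 δ) := by
            nlinarith only [habsμ, habsδ, hη, abs_nonneg (dotp δ (a (t + 1))), hk₂0]
    have h3 : k₂ * (L * l2 δ) * (k₁ * Λ) ≤ k₂ * L * P := by
      have h := mul_le_mul_of_nonneg_left hδb (mul_nonneg hk₂0.le hL0.le : (0:ℝ) ≤ k₂ * L)
      nlinarith only [h]
    have h4 := mul_le_mul_of_nonneg_right habsc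
      (mul_pos hk₁0 hΛpos).le
    nlinarith only [h4, h3]
  -- step 3 : bound on l2 Δ in terms of |c|
  have hΔ0 : 0 ≤ l2 Δ := aux.l2_nonneg Δ
  have h3 : k₁ * (Λ * l2 Δ ^ 2) ≤ (|c| * L) * l2 Δ := by
    have hray : Λ * l2 Δ ^ 2 ≤ dotp Δ ((V (t+1)).mulVec Δ) := hray_t1 Δ
    have hGΔ := hG (t + 1) (θhat t) (θhat (t + 1))
    rw [← hΔdef] at hGΔ
    rw [hid2, aux.dotp_smul_right] at hGΔ
    have habsΔ : |dotp Δ (a (t + 1))| ≤ L * l2 Δ := by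
      have h := aux.abs_dotp_le Δ (a (t + 1))
      nlinarith only [h, hat1, ha0, hΔ0, abs_nonneg (dotp Δ (a (t + 1)))]
    have hcd : c * dotp Δ (a (t + 1)) ≤ |c| * (L * l2 Δ) := by
      calc c * dotp Δ (a (t + 1)) ≤ |c * dotp Δ (a (t + 1))| := le_abs_self _
        _ = |c| * |dotp Δ (a (t + 1))| := abs_mul _ _
        _ ≤ |c| * (L * l2 Δ) := mul_le_mul_of_nonneg_left habsΔ (abs_nonneg _)
    have hk := mul_le_mul_of_nonneg_left hray hk₁0.le
    nlinarith only [hGΔ, hcd, hk]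
  -- the value of the right-hand side
  set R : ℝ := Real.sqrt (β / (k₁ * k₂ * T * ℓ)) with hRdef
  have hR0 : 0 ≤ R := Real.sqrt_nonneg _
  have hRHS0 : 0 ≤ 3 / (5 * L) * R :=
    mul_nonneg (div_nonneg (by norm_num) (by linarith)) hR0
  have hRexp : R * (rk * S * rℓ) = rβ := by
    have h1 : Real.sqrt (k₁ * k₂ * T * ℓ) = rk * S * rℓ := by
      rw [Real.sqrt_mul (mul_nonneg (mul_nonneg hk₁0.le hk₂0.le) hT0.le : (0:ℝ) ≤ k₁ * k₂ * T),
        Real.sqrt_mul (mul_pos hk₁0 hk₂0).le, hrkdef, hSdef, hrℓdef]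
    have h2 : R = rβ / (rk * S * rℓ) := by
      rw [hRdef, Real.sqrt_div (by linarith : (0:ℝ) ≤ β), h1, hrβdef]
    rw [h2]
    field_simp
  have hval : (k₁ * Λ) * (3 / (5 * L) * R) = 3 * (L * (rβ * rr * rℓ)) := by
    rw [hΛexp, ← hrrrk, ← hrℓ2, ← hRexp]
    field_simp
  have hX0 : (0:ℝ) ≤ k₂ * L ^ 3 * S * (rβ * (rr * rℓ)) :=
    le_of_lt (mul_pos (mul_pos (mul_pos hk₂0 (pow_pos hL0 3)) hS0)
      (mul_pos hrβ0 (mul_pos hrr0 hrℓ0)))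
  have hb1 : k₂ * L ^ 2 * ((11/10) * rβ * sΛ) ≤ (3/5) * (L * (rβ * rr * rℓ)) * (k₁ * Λ) := by
    have b1a : k₂ * L ^ 2 * ((11/10) * rβ * sΛ)
        ≤ (99/40) * (k₂ * L ^ 3 * S * (rβ * (rr * rℓ))) := by
      have hm := mul_le_mul_of_nonneg_left hsΛB
        (mul_nonneg (mul_nonneg (mul_nonneg hk₂0.le (sq_nonneg L))
          (by norm_num : (0:ℝ) ≤ 11/10)) hrβ0.le)
      nlinarith only [hm]
    have b1b : (99/40) * (k₂ * L ^ 3 * S * (rβ * (rr * rℓ)))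
        ≤ (3/5) * (L * (rβ * rr * rℓ)) * (k₁ * Λ) := by
      rw [hΛexp]
      nlinarith only [hX0, hℓ1]
    linarith
  have hb2 : k₂ * L ^ 2 * (2 * w * L) ≤ (2/5) * (L * (rβ * rr * rℓ)) * (k₁ * Λ) := by
    rw [hΛexp]
    have h1 : (1:ℝ) ≤ S * ℓ := by nlinarith only [hS1, hℓ1]
    have h0 : (1:ℝ) ≤ rβ * rr := by nlinarith only [hrβ1, hrr1]
    have h2 : (1:ℝ) ≤ (S * ℓ) * (rβ * rr) := by nlinarith only [h1, h0]
    have h3' : w ≤ (S * ℓ) * (rβ * rr) * rℓ := by nlinarith only [hwrℓ, h2, hrℓ0, hw0]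
    have h4 : (0:ℝ) ≤ 2 * k₂ * L ^ 3 :=
      le_of_lt (mul_pos (mul_pos (by norm_num) hk₂0) (pow_pos hL0 3))
    nlinarith only [mul_le_mul_of_nonneg_left h3' h4]
  have hA : 2 * w * (k₁ * Λ) * L ≤ 2 * (L * (rβ * rr * rℓ)) * (k₁ * Λ) := by
    have h0 : (1:ℝ) ≤ rβ * rr := by nlinarith only [hrβ1, hrr1]
    have h1 : w ≤ rβ * rr * rℓ := by nlinarith only [hwrℓ, h0, hrℓ0]
    have h2 : (0:ℝ) ≤ L * (k₁ * Λ) := le_of_lt (mul_pos hL0 (mul_pos hk₁0 hΛpos))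
    nlinarith only [mul_le_mul_of_nonneg_right h1 h2]
  have hfinal : |c| * L ≤ (k₁ * Λ) * (3 / (5 * L) * R) := by
    rw [hval]
    have hkΛ0 : (0:ℝ) < k₁ * Λ := mul_pos hk₁0 hΛpos
    have hstep : (|c| * L) * (k₁ * Λ) ≤ (3 * (L * (rβ * rr * rℓ))) * (k₁ * Λ) := by
      have h1 : (|c| * (k₁ * Λ)) * L ≤ (2 * w * (k₁ * Λ) + k₂ * L * P) * L :=
        mul_le_mul_of_nonneg_right hc hL0.le
      calc (|c| * L) * (k₁ * Λ) = (|c| * (k₁ * Λ)) * L := by ring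
        _ ≤ (2 * w * (k₁ * Λ) + k₂ * L * P) * L := h1
        _ = 2 * w * (k₁ * Λ) * L
            + (k₂ * L ^ 2 * ((11/10) * rβ * sΛ) + k₂ * L ^ 2 * (2 * w * L)) := by
            rw [hPdef]; ring
        _ ≤ 2 * (L * (rβ * rr * rℓ)) * (k₁ * Λ)
            + ((3/5) * (L * (rβ * rr * rℓ)) * (k₁ * Λ)
              + (2/5) * (L * (rβ * rr * rℓ)) * (k₁ * Λ)) :=
            add_le_add hA (add_le_add hb1 hb2)
        _ = (3 * (L * (rβ * rr * rℓ))) * (k₁ * Λ) := by ring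
    exact le_of_mul_le_mul_right hstep hkΛ0
  -- conclusion
  rcases eq_or_lt_of_le hΔ0 with hz | hz
  · rw [← hz]
    exact hRHS0
  · have hchain : k₁ * (Λ * l2 Δ ^ 2) ≤ ((k₁ * Λ) * (3 / (5 * L) * R)) * l2 Δ :=
      le_trans h3 (mul_le_mul_of_nonneg_right hfinal hΔ0)
    have hpos : (0:ℝ) < k₁ * Λ * l2 Δ := mul_pos (mul_pos hk₁0 hΛpos) hz
    have hm : (k₁ * Λ * l2 Δ) * l2 Δ ≤ (k₁ * Λ * l2 Δ) * (3 / (5 * L) * R) := by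
      nlinarith only [hchain]
    exact le_of_mul_le_mul_left hm hpos
end

section
/- No overflow for the scalar innovation encoder (deterministic form): fix T ≥ 2, m ≥ 1, γ ∈ (0,1), and let f_k = 2√(log T / k), p_1 = m + f_1, p_{k+1} = γ p_k + 2 f_k for k ≥ 1. Let θ ∈ ℝ with |θ| ≤ m, let â_1, …, â_T ∈ ℝ satisfy |â_k − θ| ≤ f_k for all k ∈ [T], let ŝ_0 = 0, and define e_k = â_k − ŝ_{k−1} and ŝ_k = ŝ_{k−1} + ẽ_k, where ẽ_k is any real number satisfying |ẽ_k − e_k| ≤ γ p_k whenever |e_k| ≤ p_k. Then |e_k| ≤ p_k for every k ∈ [T]. -/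
/-!
By induction on `k`. The first innovation is `â_1` itself, of size at most `|θ| + f_1 ≤ p_1`.
If `|e_k| ≤ p_k`, the quantizer is within `γ p_k` of `e_k`, and
`e_{k+1} = (â_{k+1} - θ) - (â_k - θ) + (e_k - ẽ_k)`, so `|e_{k+1}| ≤ f_{k+1} + f_k + γ p_k`,
which is at most `p_{k+1}` because `f` is decreasing.
-/

lemma abs_sub_add_le_of_abs_sub_le {θ a a' s ε fa fa' q : ℝ} (ha : |a - θ| ≤ fa)
    (ha' : |a' - θ| ≤ fa') (hε : |ε - (a - s)| ≤ q) :
    |a' - (s + ε)| ≤ fa' + fa + q := by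
  rw [abs_le] at ha ha' hε ⊢
  constructor <;> linarith

theorem stmt_16_general
    (T : ℕ) (hT : 2 ≤ T) (m γ : ℝ)
    (f p : ℕ → ℝ)
    (hf : ∀ k, 1 ≤ k → f k = 2 * Real.sqrt (Real.log T / k))
    (hp1 : p 1 = m + f 1)
    (hp : ∀ k, 1 ≤ k → p (k + 1) = γ * p k + 2 * f k)
    (θ : ℝ) (hθ : |θ| ≤ m)
    (ahat : ℕ → ℝ) (hahat : ∀ k ∈ Finset.Icc 1 T, |ahat k - θ| ≤ f k)
    (shat : ℕ → ℝ) (hs0 : shat 0 = 0)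
    (e : ℕ → ℝ) (he : ∀ k, 1 ≤ k → e k = ahat k - shat (k - 1))
    (etil : ℕ → ℝ)
    (hetil : ∀ k ∈ Finset.Icc 1 T, |e k| ≤ p k → |etil k - e k| ≤ γ * p k)
    (hsrec : ∀ k, 1 ≤ k → shat k = shat (k - 1) + etil k) :
    ∀ k ∈ Finset.Icc 1 T, |e k| ≤ p k := by
  have hlog : 0 ≤ Real.log T := Real.log_nonneg (by exact_mod_cast (by omega : 1 ≤ T))
  intro k hk
  obtain ⟨hk1, hkT⟩ := Finset.mem_Icc.mp hk
  clear hk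
  induction k, hk1 using Nat.le_induction with
  | base =>
    have he1 : e 1 = ahat 1 := by simp [he 1 le_rfl, hs0]
    rw [he1, hp1]
    linarith [abs_sub_abs_le_abs_sub (ahat 1) θ, hahat 1 (Finset.mem_Icc.mpr ⟨le_rfl, hkT⟩)]
  | succ k hk1 ih =>
    have hk : k ∈ Finset.Icc 1 T := Finset.mem_Icc.mpr ⟨hk1, by omega⟩
    have hf_anti : f (k + 1) ≤ f k := by
      rw [hf _ (by omega), hf k hk1]
      gcongr
      exact_mod_cast k.le_succ
    have he_succ : e (k + 1) = ahat (k + 1) - (shat (k - 1) + etil k) := by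
      rw [he _ (by omega), Nat.add_sub_cancel, hsrec k hk1]
    have hquant := hetil k hk (ih (by omega))
    rw [he k hk1] at hquant
    have hbound := abs_sub_add_le_of_abs_sub_le (hahat k hk)
      (hahat (k + 1) (Finset.mem_Icc.mpr ⟨by omega, hkT⟩)) hquant
    rw [he_succ, hp k hk1]
    linarith

/-- **No overflow for the scalar innovation encoder (deterministic form).**
With `f_k = 2√(log T / k)`, `p_1 = m + f_1`, `p_{k+1} = γ p_k + 2 f_k`, estimates `â_k`
within `f_k` of `θ`, server iterates `ŝ_k = ŝ_{k−1} + ẽ_k` where `|ẽ_k − e_k| ≤ γ p_k`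
whenever `|e_k| ≤ p_k`, and innovations `e_k = â_k − ŝ_{k−1}`, every innovation satisfies
`|e_k| ≤ p_k` for `k ∈ [T]`. -/
theorem stmt_16
    (T : ℕ) (hT : 2 ≤ T) (m γ : ℝ) (hm : 1 ≤ m) (hγ0 : 0 < γ) (hγ1 : γ < 1)
    (f p : ℕ → ℝ)
    (hf : ∀ k, 1 ≤ k → f k = 2 * Real.sqrt (Real.log T / k))
    (hp1 : p 1 = m + f 1)
    (hp : ∀ k, 1 ≤ k → p (k + 1) = γ * p k + 2 * f k)
    (θ : ℝ) (hθ : |θ| ≤ m)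
    (ahat : ℕ → ℝ) (hahat : ∀ k ∈ Finset.Icc 1 T, |ahat k - θ| ≤ f k)
    (shat : ℕ → ℝ) (hs0 : shat 0 = 0)
    (e : ℕ → ℝ) (he : ∀ k, 1 ≤ k → e k = ahat k - shat (k - 1))
    (etil : ℕ → ℝ)
    (hetil : ∀ k ∈ Finset.Icc 1 T, |e k| ≤ p k → |etil k - e k| ≤ γ * p k)
    (hsrec : ∀ k, 1 ≤ k → shat k = shat (k - 1) + etil k) :
    ∀ k ∈ Finset.Icc 1 T, |e k| ≤ p k :=
  stmt_16_general T hT m γ f p hf hp1 hp θ hθ ahat hahat shat hs0 e he etil hetil hsrec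
end

section
/- Bound on the IC-UCB quantizer radii: let B ≥ 1 be an integer, γ = 2^{−B}, T ≥ 2, m ≥ 1, and define f_k = 2√(log T / k), p_1 = m + f_1, p_{k+1} = γ p_k + 2 f_k, and q_k = γ p_k. Then for every k ≥ 1: q_k ≤ γ^k (m + f_1) + (12/B)·√(log T / k). -/
lemma stmt17_pow (B : ℕ) (hB : 1 ≤ B) : (B : ℝ) + 3 ≤ 2 ^ (B + 1) := by
  have h : B + 3 ≤ 2 ^ (B + 1) := by
    induction B with
    | zero => omega
    | succ n ih =>
      rcases Nat.eq_zero_or_pos n with h | h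
      · subst h; norm_num
      · have := ih h
        have h2 : 2 ^ (n + 1 + 1) = 2 * 2 ^ (n + 1) := by ring
        omega
  exact_mod_cast h

lemma stmt17_sqrt2 : Real.sqrt 2 ≤ 3 / 2 := by
  rw [show (3 : ℝ) / 2 = Real.sqrt ((3 / 2) ^ 2) by
    rw [Real.sqrt_sq (by norm_num)]]
  exact Real.sqrt_le_sqrt (by norm_num)

lemma stmt17_key (B : ℕ) (hB : 1 ≤ B) :
    Real.sqrt 2 * (((2 : ℝ) ^ B)⁻¹ * (12 / B + 4)) ≤ 12 / B := by
  have hb : (1 : ℝ) ≤ B := by exact_mod_cast hB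
  have hb0 : (0 : ℝ) < B := by linarith
  have hx : (0 : ℝ) < 2 ^ B := by positivity
  have hxb : (B : ℝ) + 3 ≤ 2 * 2 ^ B := by
    have := stmt17_pow B hB
    rwa [pow_succ, mul_comm] at this
  have hA : (0 : ℝ) < 12 / B + 4 := by positivity
  have h1 : Real.sqrt 2 * (((2 : ℝ) ^ B)⁻¹ * (12 / B + 4)) ≤
      (3 / 2) * (((2 : ℝ) ^ B)⁻¹ * (12 / B + 4)) := by
    apply mul_le_mul_of_nonneg_right stmt17_sqrt2
    positivity
  refine h1.trans ?_
  have heq : (3:ℝ)/2 * (((2:ℝ)^B)⁻¹*(12/B+4)) = (3*(12+4*B))/(2*(2^B*B)) := by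
    field_simp
  rw [heq, div_le_div_iff₀ (by positivity) hb0]
  nlinarith [hxb, hb0, mul_le_mul_of_nonneg_right hxb (le_of_lt hb0)]

lemma stmt17_sqrtstep (L : ℝ) (hL : 0 ≤ L) (n : ℕ) (hn : 1 ≤ n) (γ C : ℝ)
    (hγ : 0 ≤ γ) (hC : 0 ≤ C)
    (hkey : Real.sqrt 2 * (γ * (C + 4)) ≤ C) :
    γ * (C + 4) * Real.sqrt (L / n) ≤ C * Real.sqrt (L / (n + 1)) := by
  have hn0 : (0 : ℝ) < n := by exact_mod_cast hn
  have hn1 : (1 : ℝ) ≤ n := by exact_mod_cast hn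
  have h1 : Real.sqrt (L / n) ≤ Real.sqrt 2 * Real.sqrt (L / (n + 1)) := by
    rw [← Real.sqrt_mul (by norm_num)]
    apply Real.sqrt_le_sqrt
    rw [← mul_div_assoc, div_le_div_iff₀ hn0 (by linarith)]
    have : (n : ℝ) + 1 ≤ 2 * n := by linarith
    nlinarith
  calc γ * (C + 4) * Real.sqrt (L / n)
      ≤ γ * (C + 4) * (Real.sqrt 2 * Real.sqrt (L / (n + 1))) := by
        apply mul_le_mul_of_nonneg_left h1 (by positivity)
    _ = (Real.sqrt 2 * (γ * (C + 4))) * Real.sqrt (L / (n + 1)) := by ring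
    _ ≤ C * Real.sqrt (L / (n + 1)) := by
        apply mul_le_mul_of_nonneg_right hkey (Real.sqrt_nonneg _)

/-- **Bound on the IC-UCB quantizer radii.** With `γ = 2^{−B}`, `f_k = 2√(log T / k)`,
`p_1 = m + f_1`, `p_{k+1} = γ p_k + 2 f_k`, and `q_k = γ p_k`, for every `k ≥ 1`:
`q_k ≤ γ^k (m + f_1) + (12/B) √(log T / k)`. -/
theorem stmt_17
    (B : ℕ) (hB : 1 ≤ B) (T : ℕ) (hT : 2 ≤ T) (m : ℝ) (hm : 1 ≤ m)
    (γ : ℝ) (hγ : γ = ((2 : ℝ) ^ B)⁻¹)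
    (f p q : ℕ → ℝ)
    (hf : ∀ k, 1 ≤ k → f k = 2 * Real.sqrt (Real.log T / k))
    (hp1 : p 1 = m + f 1)
    (hp : ∀ k, 1 ≤ k → p (k + 1) = γ * p k + 2 * f k)
    (hq : ∀ k, 1 ≤ k → q k = γ * p k) :
    ∀ k, 1 ≤ k → q k ≤ γ ^ k * (m + f 1) + (12 / B) * Real.sqrt (Real.log T / k) := by
  have hγpos : 0 < γ := by rw [hγ]; positivity
  have hb0 : (0 : ℝ) < B := by exact_mod_cast hB
  have hC : (0 : ℝ) ≤ 12 / B := by positivity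
  have hL : 0 ≤ Real.log T :=
    Real.log_nonneg (by exact_mod_cast le_trans (by norm_num) hT)
  have hkey : Real.sqrt 2 * (γ * (12 / B + 4)) ≤ 12 / B := by
    rw [hγ, ← mul_assoc]
    rw [mul_assoc]
    exact stmt17_key B hB
  intro k hk
  induction k with
  | zero => omega
  | succ n ih =>
    rcases Nat.eq_zero_or_pos n with h | hn
    · subst h
      rw [hq 1 le_rfl, hp1, pow_one]
      have : 0 ≤ (12 / (B:ℝ)) * Real.sqrt (Real.log T / 1) := by positivity
      linarith
    · have hqn := ih hn
      have hstep : q (n + 1) = γ * q n + 2 * γ * f n := by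
        rw [hq (n + 1) (by omega), hp n hn, hq n hn]; ring
      have hfn : f n = 2 * Real.sqrt (Real.log T / n) := hf n hn
      have h1 : q (n + 1) ≤ γ * (γ ^ n * (m + f 1) + (12 / B) * Real.sqrt (Real.log T / n))
          + 2 * γ * f n := by
        rw [hstep]
        have := mul_le_mul_of_nonneg_left hqn hγpos.le
        linarith
      have h2 : γ * (γ ^ n * (m + f 1) + (12 / B) * Real.sqrt (Real.log T / n))
          + 2 * γ * f n
          = γ ^ (n + 1) * (m + f 1) + γ * (12 / B + 4) * Real.sqrt (Real.log T / n) := by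
        rw [hfn, pow_succ]; ring
      have h3 : γ * (12 / B + 4) * Real.sqrt (Real.log T / n)
          ≤ (12 / B) * Real.sqrt (Real.log T / (n + 1)) :=
        stmt17_sqrtstep _ hL n hn γ _ hγpos.le hC hkey
      have hcast : ((n + 1 : ℕ) : ℝ) = (n : ℝ) + 1 := by push_cast; ring
      rw [hcast] at *
      linarith [h1, h2.le, h3]
end

section
/- Exponential-integral estimate: for every integer B ≥ 1 and every real k ≥ 1, with a = 2^B, ∫₁^k a^s / √s ds ≤ 3 a^k / (B √k). -/
/-! Write `a^s = exp (L s)` with `L = B log 2`. On `[1, k]` one has `√k ≤ √s (1 + (k - s)/2)`, so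
the integrand is at most `exp (L s) (1 + (k - s)/2) / √k`, which has the explicit antiderivative
`exp (L s) (1/L + (k - s)/(2L) + 1/(2L²)) / √k`. Its value at `k` is
`a^k (1/L + 1/(2L²)) / √k`, and `1/L + 1/(2L²) ≤ 3/B` because `log 2 > 0.69`. -/

open Real intervalIntegral

lemma sqrt_le_sqrt_mul_one_add_half_sub {s k : ℝ} (hs : 1 ≤ s) (hsk : s ≤ k) :
    √k ≤ √s * (1 + (k - s) / 2) := by
  have hpoly : k ≤ s * (1 + (k - s) / 2) ^ 2 := by
    nlinarith [mul_nonneg (sub_nonneg.2 hsk) (sub_nonneg.2 hs),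
      mul_nonneg (mul_nonneg (sub_nonneg.2 hsk) (sub_nonneg.2 hsk)) (zero_le_one.trans hs)]
  calc √k ≤ √(s * (1 + (k - s) / 2) ^ 2) := sqrt_le_sqrt hpoly
    _ = √s * (1 + (k - s) / 2) := by
      rw [sqrt_mul (by linarith), sqrt_sq (by linarith)]

lemma hasDerivAt_exp_mul_mul_linear {L : ℝ} (hL : L ≠ 0) (k s : ℝ) :
    HasDerivAt (fun x => exp (L * x) * (1 / L + (k - x) / (2 * L) + 1 / (2 * L ^ 2)))
      (exp (L * s) * (1 + (k - s) / 2)) s := by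
  have hexp : HasDerivAt (fun x => exp (L * x)) (exp (L * s) * (L * 1)) s :=
    ((hasDerivAt_id s).const_mul L).exp
  have hlin : HasDerivAt (fun x => 1 / L + (k - x) / (2 * L) + 1 / (2 * L ^ 2))
      (0 + (0 - 1) / (2 * L) + 0) s :=
    ((hasDerivAt_const s _).add (((hasDerivAt_const s k).sub (hasDerivAt_id s)).div_const _)).add
      (hasDerivAt_const s _)
  refine (hexp.mul hlin).congr_deriv ?_
  field_simp
  ring

lemma integral_exp_mul_mul_one_add_half_sub_le {L : ℝ} (hL : 0 < L) {a k : ℝ} (hak : a ≤ k) :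
    ∫ s in a..k, exp (L * s) * (1 + (k - s) / 2) ≤ exp (L * k) * (1 / L + 1 / (2 * L ^ 2)) := by
  rw [integral_eq_sub_of_hasDerivAt (fun s _ => hasDerivAt_exp_mul_mul_linear hL.ne' k s)
    (by apply Continuous.intervalIntegrable; fun_prop)]
  have hG : 0 ≤ exp (L * a) * (1 / L + (k - a) / (2 * L) + 1 / (2 * L ^ 2)) := by
    have : 0 ≤ (k - a) / (2 * L) := div_nonneg (by linarith) (by positivity)
    positivity
  simp only [sub_self, zero_div, add_zero]
  linarith

lemma integral_exp_mul_div_sqrt_le {L : ℝ} (hL : 0 < L) {k : ℝ} (hk : 1 ≤ k) :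
    ∫ s in (1 : ℝ)..k, exp (L * s) / √s ≤ exp (L * k) * (1 / L + 1 / (2 * L ^ 2)) / √k := by
  have hsk : 0 < √k := sqrt_pos.2 (by linarith)
  calc ∫ s in (1 : ℝ)..k, exp (L * s) / √s
      ≤ ∫ s in (1 : ℝ)..k, exp (L * s) * (1 + (k - s) / 2) / √k := by
        refine integral_mono_on hk ?_ (by apply Continuous.intervalIntegrable; fun_prop) ?_
        · refine ContinuousOn.intervalIntegrable (ContinuousOn.div (by fun_prop) (by fun_prop) ?_)
          intro s hs
          rw [Set.uIcc_of_le hk] at hs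
          exact (sqrt_pos.2 (by linarith [hs.1])).ne'
        · rintro s ⟨hs1, hsk'⟩
          rw [div_le_div_iff₀ (sqrt_pos.2 (by linarith)) hsk, mul_assoc]
          gcongr
          linarith [sqrt_le_sqrt_mul_one_add_half_sub hs1 hsk']
    _ = (∫ s in (1 : ℝ)..k, exp (L * s) * (1 + (k - s) / 2)) / √k := integral_div _ _
    _ ≤ exp (L * k) * (1 / L + 1 / (2 * L ^ 2)) / √k := by
        gcongr
        exact integral_exp_mul_mul_one_add_half_sub_le hL hk

lemma inv_add_inv_two_mul_sq_le {B : ℝ} (hB : 1 ≤ B) :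
    1 / (B * log 2) + 1 / (2 * (B * log 2) ^ 2) ≤ 3 / B := by
  have hlog2 := log_two_gt_d9
  have hq : 1 ≤ 2 * log 2 * (3 * log 2 - 1) := by nlinarith
  rw [div_add_div _ _ (by positivity) (by positivity), div_le_div_iff₀ (by positivity) (by positivity)]
  nlinarith [mul_le_mul_of_nonneg_left hq (by positivity : (0 : ℝ) ≤ B ^ 3 * log 2 ^ 2),
    mul_le_mul_of_nonneg_left hB (by positivity : (0 : ℝ) ≤ B ^ 3 * log 2 ^ 3)]

/-- **Exponential-integral estimate.** For every integer `B ≥ 1` and real `k ≥ 1`, with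
`a = 2^B`, `∫₁^k a^s / √s ds ≤ 3 a^k / (B √k)`. -/
theorem stmt_18 (B : ℕ) (hB : 1 ≤ B) (k : ℝ) (hk : 1 ≤ k) :
    (∫ s in (1 : ℝ)..k, ((2 : ℝ) ^ B) ^ s / Real.sqrt s)
      ≤ 3 * ((2 : ℝ) ^ B) ^ k / (B * Real.sqrt k) := by
  have hB1 : (1 : ℝ) ≤ B := by exact_mod_cast hB
  have hL : log ((2 : ℝ) ^ B) = B * log 2 := by simp
  have hL0 : 0 < log ((2 : ℝ) ^ B) := by rw [hL]; positivity
  simp only [rpow_def_of_pos (by positivity : (0 : ℝ) < 2 ^ B)]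
  calc ∫ s in (1 : ℝ)..k, exp (log (2 ^ B) * s) / √s
      ≤ exp (log (2 ^ B) * k) * (1 / log (2 ^ B) + 1 / (2 * log (2 ^ B) ^ 2)) / √k :=
        integral_exp_mul_div_sqrt_le hL0 hk
    _ ≤ exp (log (2 ^ B) * k) * (3 / B) / √k := by
        rw [hL]
        gcongr
        exact inv_add_inv_two_mul_sq_le hB1
    _ = 3 * exp (log (2 ^ B) * k) / (B * √k) := by ring
end
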